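/- For s, t > 0 and ξ ∈ ℝ, the improper integral over y ∈ ℝ of (2πis)^{−1/2}(2πit)^{−1/2} · e^{(i/2)y²/s} · e^{(i/2)(ξ−y)²/t} exists and equals (2πi(s+t))^{−1/2} · e^{(i/2)ξ²/(s+t)}. -/

import Mathlib

open MeasureTheory Filter Real

/-- The free Feynman kernel `K s x = (2πis)^{-1/2} e^{(i/2)x²/s}` (principal branch). -/
noncomputable def freeKernel (s x : ℝ) : ℂ :=
  (2 * (Real.pi : ℂ) * Complex.I * (s : ℂ)) ^ (-(1 / 2 : ℂ)) *
    Complex.exp (Complex.I / 2 * (x : ℂ) ^ 2 / (s : ℂ))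

/-!
Completing the square, `K_s(y) K_t(ξ - y)` is a constant times `e^{iξ²/(2(s+t))} e^{c (y - m)²}`
with `c = i(s+t)/(2st)` and a real shift `m`. After one integration by parts on `[1, ∞)`, the
improper integral `∫₀^∞ e^{c y²} dy` becomes an absolutely convergent expression that is continuous
in `c` on `{re c ≤ 0, c ≠ 0}`; for `re c < 0` it is the Gaussian integral `(π/(-c))^{1/2}/2`, so
this value persists on the imaginary axis. What remains is the identity of principal roots
`(2πis)^{-1/2} (2πit)^{-1/2} (2πi st/(s+t))^{1/2} = (2πi(s+t))^{-1/2}`, which holds because all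
three bases lie on the ray `i ℝ₊`.
-/

open Set Complex Topology

/-- `∫₀^∞ e^{c y²} dy` with the part over `[1, ∞)` integrated by parts once, so that the
remaining integral converges absolutely whenever `re c ≤ 0`. -/
noncomputable def halfGaussianLimit (c : ℂ) : ℂ :=
  (∫ y in (0:ℝ)..1, cexp (c * y ^ 2)) - cexp c / (2 * c) +
    ∫ y in Ioi (1:ℝ), cexp (c * y ^ 2) / (2 * c * y ^ 2)

section FresnelIntegral

variable {c : ℂ}

lemma norm_cexp_mul_sq_div_le (hc : c.re ≤ 0) (y : ℝ) (d : ℂ) :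
    ‖cexp (c * y ^ 2) / d‖ ≤ ‖d‖⁻¹ := by
  rw [norm_div, div_eq_mul_inv, norm_exp, ← ofReal_pow, re_mul_ofReal]
  exact mul_le_of_le_one_left (by positivity)
    (Real.exp_le_one_iff.2 (mul_nonpos_of_nonpos_of_nonneg hc (sq_nonneg y)))

lemma norm_cexp_mul_sq_div_sq_le (hc : c.re ≤ 0) {y : ℝ} (hy : 0 < y) :
    ‖cexp (c * y ^ 2) / (2 * c * y ^ 2)‖ ≤ (2 * ‖c‖)⁻¹ * y ^ (-2:ℝ) := by
  refine (norm_cexp_mul_sq_div_le hc y _).trans_eq ?_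
  rw [Real.rpow_neg hy.le, Real.rpow_two]
  simp only [Complex.norm_mul, Complex.norm_ofNat, norm_pow, norm_real, norm_eq_abs, sq_abs,
    mul_inv_rev]
  ring

lemma integrableOn_Ioi_cexp_mul_sq_div_sq (hc : c.re ≤ 0) :
    IntegrableOn (fun y : ℝ => cexp (c * y ^ 2) / (2 * c * y ^ 2)) (Ioi 1) := by
  refine Integrable.mono'
    ((integrableOn_Ioi_rpow_of_lt (a := -2) (by norm_num) one_pos).const_mul (2 * ‖c‖)⁻¹)
    (Measurable.aestronglyMeasurable (by fun_prop)) ?_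
  filter_upwards [ae_restrict_mem measurableSet_Ioi] with y (hy : 1 < y)
  exact norm_cexp_mul_sq_div_sq_le hc (one_pos.trans hy)

lemma hasDerivAt_cexp_mul_sq_div (hc : c ≠ 0) {y : ℝ} (hy : y ≠ 0) :
    HasDerivAt (fun x : ℝ => cexp (c * x ^ 2) / (2 * c * x))
      (cexp (c * y ^ 2) - cexp (c * y ^ 2) / (2 * c * y ^ 2)) y := by
  have hnum : HasDerivAt (fun x : ℝ => cexp (c * x ^ 2)) (cexp (c * y ^ 2) * (c * (2 * y))) y :=
    (((hasDerivAt_pow 2 (y:ℂ)).const_mul c).cexp.comp_ofReal).congr_deriv (by ring)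
  have hden : HasDerivAt (fun x : ℝ => 2 * c * (x:ℂ)) (2 * c) y := by
    simpa using ((hasDerivAt_id (y:ℂ)).const_mul (2 * c)).comp_ofReal
  have hy' : (y:ℂ) ≠ 0 := ofReal_ne_zero.2 hy
  refine (hnum.div hden (by simp [hc, hy])).congr_deriv ?_
  field_simp

lemma integral_cexp_mul_sq_eq_by_parts (hc : c ≠ 0) {a b : ℝ} (ha : 0 < a) (hb : 0 < b) :
    ∫ y in a..b, cexp (c * y ^ 2) =
      cexp (c * b ^ 2) / (2 * c * b) - cexp (c * a ^ 2) / (2 * c * a) +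
        ∫ y in a..b, cexp (c * y ^ 2) / (2 * c * y ^ 2) := by
  have hne : ∀ y ∈ uIcc a b, y ≠ 0 := fun y hy =>
    (lt_of_lt_of_le (lt_min ha hb) hy.1).ne'
  have hcont : ContinuousOn (fun y : ℝ => cexp (c * y ^ 2) / (2 * c * y ^ 2)) (uIcc a b) :=
    ContinuousOn.div (by fun_prop) (by fun_prop) fun y hy => by simp [hc, hne y hy]
  have hftc := intervalIntegral.integral_eq_sub_of_hasDerivAt
    (fun y hy => hasDerivAt_cexp_mul_sq_div hc (hne y hy))
    ((Continuous.intervalIntegrable (by fun_prop) a b).sub (hcont.intervalIntegrable))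
  rw [intervalIntegral.integral_sub (Continuous.intervalIntegrable (by fun_prop) a b)
    hcont.intervalIntegrable] at hftc
  linear_combination hftc

lemma tendsto_cexp_mul_sq_div_atTop (hc : c.re ≤ 0) :
    Tendsto (fun R : ℝ => cexp (c * R ^ 2) / (2 * c * R)) atTop (𝓝 0) := by
  refine squeeze_zero_norm' ?_ (by simpa using tendsto_inv_atTop_zero.const_mul (2 * ‖c‖)⁻¹)
  filter_upwards [eventually_gt_atTop 0] with R hR
  refine (norm_cexp_mul_sq_div_le hc R _).trans_eq ?_
  simp only [Complex.norm_mul, Complex.norm_ofNat, norm_real, norm_eq_abs, abs_of_pos hR,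
    mul_inv_rev]
  ring

lemma tendsto_integral_cexp_mul_sq_halfGaussianLimit (hc : c.re ≤ 0) (hc0 : c ≠ 0) :
    Tendsto (fun R : ℝ => ∫ y in (0:ℝ)..R, cexp (c * y ^ 2)) atTop (𝓝 (halfGaussianLimit c)) := by
  have hlim := (tendsto_const_nhds (x := ∫ y in (0:ℝ)..1, cexp (c * y ^ 2))).add
    (((tendsto_cexp_mul_sq_div_atTop hc).sub_const (cexp c / (2 * c))).add
      (intervalIntegral_tendsto_integral_Ioi 1 (integrableOn_Ioi_cexp_mul_sq_div_sq hc) tendsto_id))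
  rw [zero_sub, ← add_assoc, ← sub_eq_add_neg] at hlim
  refine hlim.congr' ?_
  filter_upwards [eventually_gt_atTop 0] with R hR
  rw [← intervalIntegral.integral_add_adjacent_intervals (a := 0) (b := 1) (c := R)
    (Continuous.intervalIntegrable (by fun_prop) _ _)
    (Continuous.intervalIntegrable (by fun_prop) _ _),
    integral_cexp_mul_sq_eq_by_parts hc0 one_pos hR]
  simp only [id, ofReal_one, one_pow, mul_one]

lemma halfGaussianLimit_of_re_neg (hc : c.re < 0) :
    halfGaussianLimit c = (π / -c) ^ (1 / 2 : ℂ) / 2 := by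
  have hb : 0 < (-c).re := by simpa using hc
  refine tendsto_nhds_unique
    (tendsto_integral_cexp_mul_sq_halfGaussianLimit hc.le (by rintro rfl; simp at hc)) ?_
  have hvalue := integral_gaussian_complex_Ioi hb
  simp only [neg_neg] at hvalue
  rw [← hvalue]
  simpa using
    intervalIntegral_tendsto_integral_Ioi 0 (integrable_cexp_neg_mul_sq hb).integrableOn tendsto_id

lemma continuousOn_halfGaussianLimit :
    ContinuousOn halfGaussianLimit {c | c.re ≤ 0 ∧ c ≠ 0} := by
  rintro c₀ ⟨-, hc₀⟩
  have hbody : Continuous fun c : ℂ => ∫ y in (0:ℝ)..1, cexp (c * y ^ 2) :=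
    intervalIntegral.continuous_parametric_intervalIntegral_of_continuous' (by fun_prop) 0 1
  have hboundary : ContinuousAt (fun c : ℂ => cexp c / (2 * c)) c₀ := by
    fun_prop (disch := simpa)
  have hnear : ∀ᶠ c in 𝓝[{c | c.re ≤ 0 ∧ c ≠ 0}] c₀, c.re ≤ 0 ∧ ‖c₀‖ / 2 ≤ ‖c‖ := by
    filter_upwards [self_mem_nhdsWithin, nhdsWithin_le_nhds ((continuous_norm.tendsto c₀).eventually
      (lt_mem_nhds (half_lt_self (norm_pos_iff.2 hc₀))))] with c hc hnorm
    exact ⟨hc.1, hnorm.le⟩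
  have htail : ContinuousWithinAt
      (fun c : ℂ => ∫ y in Ioi (1:ℝ), cexp (c * y ^ 2) / (2 * c * y ^ 2))
      {c | c.re ≤ 0 ∧ c ≠ 0} c₀ := by
    refine continuousWithinAt_of_dominated (bound := fun y : ℝ => ‖c₀‖⁻¹ * y ^ (-2:ℝ))
      (Eventually.of_forall fun c => Measurable.aestronglyMeasurable (by fun_prop)) ?_
      ((integrableOn_Ioi_rpow_of_lt (a := -2) (by norm_num) one_pos).const_mul _) ?_
    · filter_upwards [hnear] with c ⟨hre, hnorm⟩
      filter_upwards [ae_restrict_mem measurableSet_Ioi] with y (hy : 1 < y)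
      refine (norm_cexp_mul_sq_div_sq_le hre (one_pos.trans hy)).trans ?_
      gcongr
      linarith
    · filter_upwards [ae_restrict_mem measurableSet_Ioi] with y (hy : 1 < y)
      have hy0 : (y:ℂ) ≠ 0 := ofReal_ne_zero.2 (by linarith)
      exact ContinuousAt.continuousWithinAt (by fun_prop (disch := simp [hc₀, hy0]))
  exact (hbody.continuousWithinAt.sub hboundary.continuousWithinAt).add htail

lemma ofReal_div_neg_mem_slitPlane {r : ℝ} (hr : 0 < r) (hc : c.re ≤ 0) (hc0 : c ≠ 0) :
    (r : ℂ) / -c ∈ slitPlane := by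
  have hn : 0 < normSq c := normSq_pos.2 hc0
  rw [mem_slitPlane_iff, div_re, div_im]
  rcases hc.lt_or_eq with hre | hre
  · left
    simp only [ofReal_re, ofReal_im, neg_re, zero_mul, zero_div, add_zero, normSq_neg]
    exact div_pos (mul_pos hr (neg_pos.2 hre)) hn
  · right
    have him : c.im ≠ 0 := fun him => hc0 (Complex.ext hre him)
    simp [normSq_neg, hr.ne', him, hn.ne']

lemma halfGaussianLimit_eq (hc : c.re ≤ 0) (hc0 : c ≠ 0) :
    halfGaussianLimit c = (π / -c) ^ (1 / 2 : ℂ) / 2 := by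
  refine EqOn.of_subset_closure (s := {c : ℂ | c.re < 0})
    (fun c hc => halfGaussianLimit_of_re_neg hc) continuousOn_halfGaussianLimit ?_ ?_ ?_ ⟨hc, hc0⟩
  · rintro c ⟨hre, hne⟩
    refine ContinuousAt.continuousWithinAt ?_
    have hmem := ofReal_div_neg_mem_slitPlane pi_pos hre hne
    fun_prop (disch := first | exact hmem | simp [hne])
  · exact fun c (hc : c.re < 0) => ⟨hc.le, by rintro rfl; simp at hc⟩
  · rw [closure_setOfPred_re_lt]
    exact fun c hc => hc.1

theorem tendsto_integral_cexp_mul_sq (hc : c.re ≤ 0) (hc0 : c ≠ 0) :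
    Tendsto (fun R : ℝ => ∫ y in (0:ℝ)..R, cexp (c * y ^ 2)) atTop
      (𝓝 ((π / -c) ^ (1 / 2 : ℂ) / 2)) :=
  halfGaussianLimit_eq hc hc0 ▸ tendsto_integral_cexp_mul_sq_halfGaussianLimit hc hc0

lemma integral_neg_zero_cexp_mul_sq (c : ℂ) (b : ℝ) :
    ∫ y in -b..0, cexp (c * y ^ 2) = ∫ y in (0:ℝ)..b, cexp (c * y ^ 2) := by
  rw [← neg_zero, ← intervalIntegral.integral_comp_neg (fun y : ℝ => cexp (c * y ^ 2))]
  simp only [ofReal_neg, neg_sq, neg_zero]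

theorem tendsto_integral_cexp_mul_sub_sq (hc : c.re ≤ 0) (hc0 : c ≠ 0) (m : ℝ) :
    Tendsto (fun R : ℝ => ∫ y in (-R)..R, cexp (c * (y - m) ^ 2)) atTop
      (𝓝 ((π / -c) ^ (1 / 2 : ℂ))) := by
  have hsplit (R : ℝ) : ∫ y in (-R)..R, cexp (c * (y - m) ^ 2) =
      (∫ y in (0:ℝ)..(R + m), cexp (c * y ^ 2)) + ∫ y in (0:ℝ)..(R - m), cexp (c * y ^ 2) := by
    have hshift := intervalIntegral.integral_comp_sub_right (a := -R) (b := R)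
      (fun y : ℝ => cexp (c * y ^ 2)) m
    push_cast at hshift
    rw [hshift, ← intervalIntegral.integral_add_adjacent_intervals (b := 0)
      (Continuous.intervalIntegrable (by fun_prop) _ _)
      (Continuous.intervalIntegrable (by fun_prop) _ _), show -R - m = -(R + m) by ring,
      integral_neg_zero_cexp_mul_sq]
  have hhalf := tendsto_integral_cexp_mul_sq hc hc0
  have hsum := (hhalf.comp (tendsto_atTop_add_const_right _ m tendsto_id)).add
    (hhalf.comp (tendsto_atTop_add_const_right _ (-m) tendsto_id))
  rw [add_halves] at hsum
  refine hsum.congr fun R => ?_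
  rw [hsplit, sub_eq_add_neg]
  rfl

end FresnelIntegral

theorem tendsto_integral_cexp_mul_sq_mul_cexp_mul_sub_sq {c : ℂ} (hc : c.re ≤ 0) (hc0 : c ≠ 0)
    {a b : ℝ} (hab : 0 < a + b) (ξ : ℝ) :
    Tendsto (fun R : ℝ => ∫ y in (-R)..R, cexp (a * c * y ^ 2) * cexp (b * c * (ξ - y) ^ 2)) atTop
      (𝓝 (cexp (a * b / (a + b) * c * ξ ^ 2) * (π / -((a + b) * c)) ^ (1 / 2 : ℂ))) := by
  have hab' : ((a + b : ℝ) : ℂ) ≠ 0 := ofReal_ne_zero.2 hab.ne'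
  have hre : ((a + b) * c).re ≤ 0 := by
    rw [← ofReal_add, re_ofReal_mul]; exact mul_nonpos_of_nonneg_of_nonpos hab.le hc
  have hne : ((a + b) * c : ℂ) ≠ 0 := by push_cast at hab'; exact mul_ne_zero hab' hc0
  have hsq (y : ℝ) : cexp (a * c * y ^ 2) * cexp (b * c * (ξ - y) ^ 2) =
      cexp (a * b / (a + b) * c * ξ ^ 2) *
        cexp ((a + b) * c * (y - (b * ξ / (a + b) : ℝ)) ^ 2) := by
    rw [← Complex.exp_add, ← Complex.exp_add]
    congr 1
    push_cast at hab' ⊢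
    field_simp
    ring
  have hlim := (tendsto_integral_cexp_mul_sub_sq hre hne (b * ξ / (a + b))).const_mul
    (cexp (a * b / (a + b) * c * ξ ^ 2))
  refine hlim.congr fun R => ?_
  rw [← intervalIntegral.integral_const_mul]
  exact intervalIntegral.integral_congr fun y _ => (hsq y).symm

lemma ofReal_mul_I_cpow {r : ℝ} (hr : 0 < r) (w : ℂ) :
    ((r : ℂ) * I) ^ w = (r : ℂ) ^ w * I ^ w := by
  rw [cpow_def_of_ne_zero (by simp [hr.ne']), log_ofReal_mul hr I_ne_zero,
    cpow_def_of_ne_zero (ofReal_ne_zero.2 hr.ne'), cpow_def_of_ne_zero I_ne_zero, add_mul,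
    Complex.exp_add, ofReal_log hr.le]

lemma rpow_neg_half_mul_rpow_neg_half_mul_rpow_half {x y : ℝ} (hx : 0 < x) (hy : 0 < y) :
    x ^ (-(1 / 2) : ℝ) * y ^ (-(1 / 2) : ℝ) * (x * y / (x + y)) ^ (1 / 2 : ℝ) =
      (x + y) ^ (-(1 / 2) : ℝ) := by
  rw [Real.div_rpow (by positivity) (by positivity), Real.mul_rpow hx.le hy.le,
    Real.rpow_neg hx.le, Real.rpow_neg hy.le, Real.rpow_neg (by positivity)]
  have : 0 < x ^ (1 / 2 : ℝ) := by positivity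
  have : 0 < y ^ (1 / 2 : ℝ) := by positivity
  have : 0 < (x + y) ^ (1 / 2 : ℝ) := by positivity
  field_simp

lemma mul_I_cpow_neg_half_mul_cpow_neg_half_mul_cpow_half {x y : ℝ} (hx : 0 < x) (hy : 0 < y) :
    ((x : ℂ) * I) ^ (-(1 / 2) : ℂ) * ((y : ℂ) * I) ^ (-(1 / 2) : ℂ) *
        (((x * y / (x + y) : ℝ) : ℂ) * I) ^ (1 / 2 : ℂ) =
      (((x + y : ℝ) : ℂ) * I) ^ (-(1 / 2) : ℂ) := by
  have hI : I ^ (-(1 / 2) : ℂ) * I ^ (1 / 2 : ℂ) = 1 := by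
    rw [← cpow_add _ _ I_ne_zero, neg_add_cancel, cpow_zero]
  have hreal := congrArg ((↑) : ℝ → ℂ) (rpow_neg_half_mul_rpow_neg_half_mul_rpow_half hx hy)
  rw [ofReal_mul_I_cpow hx, ofReal_mul_I_cpow hy, ofReal_mul_I_cpow (by positivity),
    ofReal_mul_I_cpow (by positivity)]
  push_cast [ofReal_cpow hx.le, ofReal_cpow hy.le,
    ofReal_cpow (by positivity : 0 ≤ x * y / (x + y)), ofReal_cpow (by positivity : 0 ≤ x + y)]
    at hreal ⊢
  linear_combination (I ^ (-(1 / 2) : ℂ)) * hreal +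
    ((x : ℂ) ^ (-(1 / 2) : ℂ) * (y : ℂ) ^ (-(1 / 2) : ℂ) * ((x : ℂ) * y / (x + y)) ^ (1 / 2 : ℂ) *
      I ^ (-(1 / 2) : ℂ)) * hI

lemma freeKernel_eq_cpow_mul_cexp (s x : ℝ) :
    freeKernel s x =
      (((2 * π * s : ℝ) : ℂ) * I) ^ (-(1 / 2) : ℂ) * cexp ((s⁻¹ : ℝ) * (I / 2) * x ^ 2) := by
  simp only [freeKernel]
  push_cast
  ring_nf

lemma pi_div_neg_inv_add_inv_mul_I_div_two {s t : ℝ} (hs : 0 < s) (ht : 0 < t) :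
    (π : ℂ) / -((s⁻¹ + t⁻¹ : ℝ) * (I / 2)) =
      (((2 * π * s) * (2 * π * t) / (2 * π * s + 2 * π * t) : ℝ) : ℂ) * I := by
  have : (s : ℂ) ≠ 0 := ofReal_ne_zero.2 hs.ne'
  have : (t : ℂ) ≠ 0 := ofReal_ne_zero.2 ht.ne'
  have hst : (s + t : ℂ) ≠ 0 := by exact_mod_cast (add_pos hs ht).ne'
  push_cast
  field_simp
  rw [I_sq, add_comm (t : ℂ), div_self hst]

/-- Two-step convolution identity for the free Feynman propagator: for `s, t > 0`,
`∫_ℝ K_s(y) K_t(ξ - y) dy = K_{s+t}(ξ)` as an improper Riemann integral. -/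
theorem freeKernel_convolution (s t : ℝ) (hs : 0 < s) (ht : 0 < t) (ξ : ℝ) :
    Tendsto (fun R : ℝ => ∫ y in (-R)..R, freeKernel s y * freeKernel t (ξ - y)) atTop
      (nhds (freeKernel (s + t) ξ)) := by
  have hlim := (tendsto_integral_cexp_mul_sq_mul_cexp_mul_sub_sq (c := I / 2) (by simp) (by simp)
    (by positivity : 0 < s⁻¹ + t⁻¹) ξ).const_mul
      ((((2 * π * s : ℝ) : ℂ) * I) ^ (-(1 / 2) : ℂ) * (((2 * π * t : ℝ) : ℂ) * I) ^ (-(1 / 2) : ℂ))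
  have hexponent : (s⁻¹ * t⁻¹ / (s⁻¹ + t⁻¹) : ℝ) = (s + t)⁻¹ := by
    field_simp
    ring
  simp only [freeKernel_eq_cpow_mul_cexp]
  convert hlim using 2 with R
  · rw [← intervalIntegral.integral_const_mul]
    refine intervalIntegral.integral_congr fun y _ => ?_
    push_cast
    ring
  · rw [← ofReal_add, ← ofReal_mul, ← ofReal_div, hexponent,
      pi_div_neg_inv_add_inv_mul_I_div_two hs ht,
      show 2 * π * (s + t) = 2 * π * s + 2 * π * t by ring,
      ← mul_I_cpow_neg_half_mul_cpow_neg_half_mul_cpow_half (by positivity) (by positivity)]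
    ring
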